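/- Let k be a field, n a positive integer, ζ ∈ k a primitive n-th root of unity, and let A = k⟦x,y⟧/(xy). Let G be the group of k-algebra automorphisms of A generated by g : x ↦ ζx, y ↦ ζ⁻¹y and σ : x ↦ y, y ↦ x (a dihedral group of order 2n). Then the k-algebra homomorphism k⟦t⟧ → A determined by t ↦ xⁿ + yⁿ is injective, and its range is exactly the subalgebra of elements of A fixed by every element of G. In particular, the ring of invariants of this dihedral action on the complete local ring of a node is a formal power series ring in one variable, hence regular. -/

import Mathlib

/-- The coefficientwise rescaling `x ↦ ζx`, `y ↦ ζ⁻¹y` on `k⟦x,y⟧` (with `x` the variable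
of index `0` and `y` the variable of index `1`). -/
noncomputable def nodeRescale (k : Type*) [Field k] (ζ : k) :
    MvPowerSeries (Fin 2) k → MvPowerSeries (Fin 2) k :=
  fun f d => ζ ^ (d 0) * ζ⁻¹ ^ (d 1) * MvPowerSeries.coeff d f

/-- The coefficientwise exchange of the two variables `x ↦ y`, `y ↦ x` on `k⟦x,y⟧`. -/
noncomputable def nodeSwap (k : Type*) [Field k] :
    MvPowerSeries (Fin 2) k → MvPowerSeries (Fin 2) k :=
  fun f d => MvPowerSeries.coeff (Finsupp.single 0 (d 1) + Finsupp.single 1 (d 0)) f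

/-- The coefficientwise substitution `t ↦ xⁿ + yⁿ`, `k⟦t⟧ → k⟦x,y⟧`; the coefficient of
`x^(na) y^(nb)` in `f(xⁿ + yⁿ)` is `(a+b choose a)` times the coefficient of `t^(a+b)`
in `f`, and all other coefficients vanish. -/
noncomputable def nodePowerSumSubst (k : Type*) [Field k] (n : ℕ) :
    PowerSeries k → MvPowerSeries (Fin 2) k :=
  fun f d =>
    if n ∣ d 0 ∧ n ∣ d 1 then
      (Nat.choose (d 0 / n + d 1 / n) (d 0 / n) : k) *
        PowerSeries.coeff (d 0 / n + d 1 / n) f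
    else 0

namespace NodeAux

open MvPowerSeries Finsupp

variable {k : Type*} [Field k]

lemma fin2_single0 (d : Fin 2 →₀ ℕ) (h : d 1 = 0) : d = Finsupp.single 0 (d 0) := by
  ext j; fin_cases j
  · simp
  · simp [h, Finsupp.single_apply]

lemma fin2_single1 (d : Fin 2 →₀ ℕ) (h : d 0 = 0) : d = Finsupp.single 1 (d 1) := by
  ext j; fin_cases j
  · simp [h, Finsupp.single_apply]
  · simp

lemma fin2_zero (d : Fin 2 →₀ ℕ) (h0 : d 0 = 0) (h1 : d 1 = 0) : d = 0 := by
  ext j; fin_cases j <;> simp [h0, h1]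

lemma fin2_eq (i : Fin 2) : i = 0 ∨ i = 1 := by
  fin_cases i
  exacts [Or.inl rfl, Or.inr rfl]

lemma s00 (m : ℕ) : (Finsupp.single (0 : Fin 2) m) 0 = m := by simp

lemma s01 (m : ℕ) : (Finsupp.single (0 : Fin 2) m) 1 = 0 := by
  simp [Finsupp.single_apply]

lemma s10 (m : ℕ) : (Finsupp.single (1 : Fin 2) m) 0 = 0 := by
  simp [Finsupp.single_apply]

lemma s11 (m : ℕ) : (Finsupp.single (1 : Fin 2) m) 1 = m := by simp

lemma mem_span_iff (f : MvPowerSeries (Fin 2) k) :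
    f ∈ Ideal.span {(MvPowerSeries.X 0 * MvPowerSeries.X 1 : MvPowerSeries (Fin 2) k)} ↔
      ∀ (i : Fin 2) (m : ℕ), MvPowerSeries.coeff (Finsupp.single i m) f = 0 := by
  have hXY : (MvPowerSeries.X 0 * MvPowerSeries.X 1 : MvPowerSeries (Fin 2) k)
      = monomial (Finsupp.single 0 1 + Finsupp.single 1 1) 1 := by
    rw [MvPowerSeries.X, MvPowerSeries.X, monomial_mul_monomial, one_mul]
  constructor
  · intro hf i m
    obtain ⟨c, hc⟩ := Ideal.mem_span_singleton'.mp hf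
    rw [← hc, hXY, coeff_mul_monomial, if_neg]
    intro hle
    fin_cases i
    · have := Finsupp.le_def.mp hle 1
      simp [Finsupp.single_apply] at this
    · have := Finsupp.le_def.mp hle 0
      simp [Finsupp.single_apply] at this
  · intro h
    rw [Ideal.mem_span_singleton']
    refine ⟨(show MvPowerSeries (Fin 2) k from fun d => f (d + (Finsupp.single 0 1 + Finsupp.single 1 1))), ?_⟩
    apply MvPowerSeries.ext
    intro d
    rw [hXY, coeff_mul_monomial]
    split_ifs with hle
    · rw [mul_one, MvPowerSeries.coeff_apply, MvPowerSeries.coeff_apply,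
        tsub_add_cancel_of_le hle]
    · have hb : d 0 = 0 ∨ d 1 = 0 := by
        by_contra hb
        push_neg at hb
        refine hle (Finsupp.le_def.mpr fun j => ?_)
        fin_cases j
        · simpa [Finsupp.single_apply, Nat.one_le_iff_ne_zero] using hb.1
        · simpa [Finsupp.single_apply, Nat.one_le_iff_ne_zero] using hb.2
      rcases hb with hb | hb
      · rw [fin2_single1 d hb]
        exact (h 1 (d 1)).symm
      · rw [fin2_single0 d hb]
        exact (h 0 (d 0)).symm

lemma mk_eq_mk_iff {I : Ideal (MvPowerSeries (Fin 2) k)}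
    (hI : I = Ideal.span {MvPowerSeries.X 0 * MvPowerSeries.X 1})
    (f f' : MvPowerSeries (Fin 2) k) :
    Ideal.Quotient.mk I f = Ideal.Quotient.mk I f' ↔
      ∀ (i : Fin 2) (m : ℕ), MvPowerSeries.coeff (Finsupp.single i m) f
        = MvPowerSeries.coeff (Finsupp.single i m) f' := by
  rw [Ideal.Quotient.eq, hI, mem_span_iff]
  constructor
  · intro h i m
    have := h i m
    rwa [map_sub, sub_eq_zero] at this
  · intro h i m
    rw [map_sub, sub_eq_zero]
    exact h i m

lemma coeff_subst_single {n : ℕ} (i : Fin 2) (m : ℕ) (f : PowerSeries k) :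
    MvPowerSeries.coeff (Finsupp.single i m) (nodePowerSumSubst k n f) =
      if n ∣ m then PowerSeries.coeff (m / n) f else 0 := by
  rw [MvPowerSeries.coeff_apply]
  unfold nodePowerSumSubst
  fin_cases i <;>
    simp [Finsupp.single_apply, Nat.zero_div, Nat.choose_self, Nat.choose_zero_right]

lemma subst_add {n : ℕ} (f g : PowerSeries k) :
    nodePowerSumSubst k n (f + g) = nodePowerSumSubst k n f + nodePowerSumSubst k n g := by
  funext d
  have h : (nodePowerSumSubst k n f + nodePowerSumSubst k n g) d
      = nodePowerSumSubst k n f d + nodePowerSumSubst k n g d := rfl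
  rw [h]
  unfold nodePowerSumSubst
  split_ifs with hd
  · rw [map_add, mul_add]
  · rw [add_zero]

lemma subst_zero {n : ℕ} : nodePowerSumSubst k n (0 : PowerSeries k) = 0 := by
  funext d
  rw [show (0 : MvPowerSeries (Fin 2) k) d = 0 from rfl]
  unfold nodePowerSumSubst
  simp

lemma subst_C {n : ℕ} (hn : 0 < n) (c : k) :
    nodePowerSumSubst k n (PowerSeries.C c) = MvPowerSeries.C c := by
  apply MvPowerSeries.ext
  intro d
  rw [MvPowerSeries.coeff_C, MvPowerSeries.coeff_apply]
  unfold nodePowerSumSubst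
  split_ifs with h hd hd
  · subst hd; simp
  · rw [PowerSeries.coeff_C, if_neg, mul_zero]
    intro h0
    apply hd
    apply fin2_zero
    · have := Nat.eq_zero_of_add_eq_zero_right h0
      rw [← Nat.div_mul_cancel h.1, this, zero_mul]
    · have := Nat.eq_zero_of_add_eq_zero_left h0
      rw [← Nat.div_mul_cancel h.2, this, zero_mul]
  · exfalso; subst hd; simp at h
  · rfl

lemma subst_one {n : ℕ} (hn : 0 < n) : nodePowerSumSubst k n (1 : PowerSeries k) = 1 := by
  rw [← map_one (PowerSeries.C (R := k)), subst_C hn, map_one]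

def mulEmb (n : ℕ) (hn : 0 < n) : ℕ × ℕ ↪ ℕ × ℕ :=
  ⟨fun p => (n * p.1, n * p.2), by
    intro p q h
    simp only [Prod.mk.injEq] at h
    exact Prod.ext (Nat.eq_of_mul_eq_mul_left hn h.1) (Nat.eq_of_mul_eq_mul_left hn h.2)⟩

lemma sum_div_aux {n : ℕ} (hn : 0 < n) (m : ℕ) (c c' : ℕ → k) :
    (∑ p ∈ Finset.HasAntidiagonal.antidiagonal m,
      (if n ∣ p.1 then c (p.1 / n) else 0) * (if n ∣ p.2 then c' (p.2 / n) else 0)) =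
      if n ∣ m then ∑ p ∈ Finset.HasAntidiagonal.antidiagonal (m / n), c p.1 * c' p.2 else 0 := by
  split_ifs with hm
  · obtain ⟨m', rfl⟩ := hm
    rw [Nat.mul_div_cancel_left _ hn]
    rw [← Finset.sum_subset (s₁ := (Finset.HasAntidiagonal.antidiagonal m').map (mulEmb n hn))
      (f := fun p => (if n ∣ p.1 then c (p.1 / n) else 0) * (if n ∣ p.2 then c' (p.2 / n) else 0))]
    · rw [Finset.sum_map]
      apply Finset.sum_congr rfl
      intro p hp
      show (if n ∣ n * p.1 then c (n * p.1 / n) else 0) * (if n ∣ n * p.2 then c' (n * p.2 / n) else 0) = _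
      rw [if_pos (dvd_mul_right n p.1), if_pos (dvd_mul_right n p.2),
        Nat.mul_div_cancel_left _ hn, Nat.mul_div_cancel_left _ hn]
    · intro p hp
      rw [Finset.mem_map] at hp
      obtain ⟨q, hq, hq2⟩ := hp
      rw [Finset.HasAntidiagonal.mem_antidiagonal] at hq ⊢
      rw [← hq2]
      show n * q.1 + n * q.2 = n * m'
      rw [← Nat.mul_add, hq]
    · intro p hp hnp
      rw [Finset.HasAntidiagonal.mem_antidiagonal] at hp
      by_cases h1 : n ∣ p.1
      · by_cases h2 : n ∣ p.2
        · exfalso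
          apply hnp
          rw [Finset.mem_map]
          refine ⟨(p.1 / n, p.2 / n), ?_, ?_⟩
          · rw [Finset.HasAntidiagonal.mem_antidiagonal]
            apply Nat.eq_of_mul_eq_mul_left hn
            rw [Nat.mul_add, Nat.mul_div_cancel' h1, Nat.mul_div_cancel' h2, hp]
          · show (n * (p.1 / n), n * (p.2 / n)) = p
            rw [Nat.mul_div_cancel' h1, Nat.mul_div_cancel' h2]
        · rw [if_neg h2, mul_zero]
      · rw [if_neg h1, zero_mul]
  · apply Finset.sum_eq_zero
    intro p hp
    rw [Finset.HasAntidiagonal.mem_antidiagonal] at hp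
    by_cases h1 : n ∣ p.1
    · by_cases h2 : n ∣ p.2
      · exact absurd (hp ▸ dvd_add h1 h2) hm
      · rw [if_neg h2, mul_zero]
    · rw [if_neg h1, zero_mul]

lemma subst_mul_boundary {n : ℕ} (hn : 0 < n) (f g : PowerSeries k) (i : Fin 2) (m : ℕ) :
    MvPowerSeries.coeff (Finsupp.single i m) (nodePowerSumSubst k n (f * g)) =
      MvPowerSeries.coeff (Finsupp.single i m)
        (nodePowerSumSubst k n f * nodePowerSumSubst k n g) := by
  rw [MvPowerSeries.coeff_mul, Finsupp.antidiagonal_single, Finset.sum_map,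
    coeff_subst_single, PowerSeries.coeff_mul]
  rw [← sum_div_aux hn m (fun a => PowerSeries.coeff a f) (fun a => PowerSeries.coeff a g)]
  apply Finset.sum_congr rfl
  intro p hp
  rw [Function.Embedding.coe_prodMap]
  rw [Prod.map_fst, Prod.map_snd]
  simp only [Function.Embedding.coeFn_mk]
  rw [coeff_subst_single, coeff_subst_single]

lemma swap_subst {n : ℕ} (f : PowerSeries k) :
    nodeSwap k (nodePowerSumSubst k n f) = nodePowerSumSubst k n f := by
  funext d
  show MvPowerSeries.coeff (Finsupp.single 0 (d 1) + Finsupp.single 1 (d 0))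
      (nodePowerSumSubst k n f) = _
  rw [MvPowerSeries.coeff_apply]
  unfold nodePowerSumSubst
  have e0 : ((Finsupp.single (0 : Fin 2) (d 1) + Finsupp.single 1 (d 0) : Fin 2 →₀ ℕ)) 0
      = d 1 := by simp [Finsupp.single_apply]
  have e1 : ((Finsupp.single (0 : Fin 2) (d 1) + Finsupp.single 1 (d 0) : Fin 2 →₀ ℕ)) 1
      = d 0 := by simp [Finsupp.single_apply]
  rw [e0, e1]
  by_cases h : n ∣ d 0 ∧ n ∣ d 1
  · rw [if_pos ⟨h.2, h.1⟩, if_pos h, add_comm (d 1 / n)]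
    have hch : ((d 0 / n + d 1 / n).choose (d 1 / n) : k)
        = ((d 0 / n + d 1 / n).choose (d 0 / n) : k) :=
      congrArg (fun t : ℕ => (t : k)) Nat.choose_symm_add.symm
    rw [hch]
  · rw [if_neg (fun hc => h ⟨hc.2, hc.1⟩), if_neg h]

lemma rescale_subst_boundary {n : ℕ} {ζ : k} (hζ : IsPrimitiveRoot ζ n) (f : PowerSeries k)
    (i : Fin 2) (m : ℕ) :
    MvPowerSeries.coeff (Finsupp.single i m) (nodeRescale k ζ (nodePowerSumSubst k n f))
      = MvPowerSeries.coeff (Finsupp.single i m) (nodePowerSumSubst k n f) := by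
  have hco : MvPowerSeries.coeff (Finsupp.single i m) (nodeRescale k ζ (nodePowerSumSubst k n f))
      = ζ ^ ((Finsupp.single i m) 0) * ζ⁻¹ ^ ((Finsupp.single i m) 1) *
        MvPowerSeries.coeff (Finsupp.single i m) (nodePowerSumSubst k n f) := rfl
  rw [hco, coeff_subst_single]
  split_ifs with h
  · obtain ⟨a, rfl⟩ := h
    rcases fin2_eq i with rfl | rfl
    · rw [s00, s01, pow_zero, mul_one, pow_mul, hζ.pow_eq_one, one_pow, one_mul]
    · rw [s10, s11, pow_zero, one_mul, pow_mul, hζ.inv.pow_eq_one, one_pow, one_mul]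
  · rw [mul_zero]

noncomputable def Phi (n : ℕ) (hn : 0 < n) (I : Ideal (MvPowerSeries (Fin 2) k))
    (hI : I = Ideal.span {MvPowerSeries.X 0 * MvPowerSeries.X 1}) :
    PowerSeries k →ₐ[k] (MvPowerSeries (Fin 2) k ⧸ I) where
  toFun f := Ideal.Quotient.mk I (nodePowerSumSubst k n f)
  map_one' := by
    show Ideal.Quotient.mk I (nodePowerSumSubst k n 1) = 1
    rw [subst_one hn, map_one]
  map_mul' f g := by
    show Ideal.Quotient.mk I (nodePowerSumSubst k n (f * g))
      = Ideal.Quotient.mk I (nodePowerSumSubst k n f) * Ideal.Quotient.mk I (nodePowerSumSubst k n g)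
    rw [← map_mul]
    exact (mk_eq_mk_iff hI _ _).mpr fun i m => subst_mul_boundary hn f g i m
  map_zero' := by
    show Ideal.Quotient.mk I (nodePowerSumSubst k n 0) = 0
    rw [subst_zero, map_zero]
  map_add' f g := by
    show Ideal.Quotient.mk I (nodePowerSumSubst k n (f + g))
      = Ideal.Quotient.mk I (nodePowerSumSubst k n f) + Ideal.Quotient.mk I (nodePowerSumSubst k n g)
    rw [subst_add, map_add]
  commutes' c := by
    show Ideal.Quotient.mk I (nodePowerSumSubst k n (algebraMap k (PowerSeries k) c))
      = algebraMap k (MvPowerSeries (Fin 2) k ⧸ I) c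
    rw [PowerSeries.algebraMap_apply, Algebra.algebraMap_self_apply, subst_C hn,
      show algebraMap k (MvPowerSeries (Fin 2) k ⧸ I) c
        = Ideal.Quotient.mk I (algebraMap k (MvPowerSeries (Fin 2) k) c) from rfl,
      MvPowerSeries.algebraMap_apply, Algebra.algebraMap_self_apply]

end NodeAux

/-- Let `k` be a field, `n > 0`, `ζ` a primitive `n`-th root of unity and
`A = k⟦x,y⟧/(xy)` the complete local ring of a node. Let `G` be the (dihedral, of order
`2n`) group of `k`-algebra automorphisms of `A` generated by `g : x ↦ ζx, y ↦ ζ⁻¹y` and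
`σ : x ↦ y, y ↦ x`. Then the `k`-algebra homomorphism `k⟦t⟧ → A` determined by
`t ↦ xⁿ + yⁿ` is injective with range exactly the subalgebra of elements fixed by every
element of `G`: the invariant ring of this dihedral action is a power series ring in one
variable, hence regular. -/
theorem node_dihedral_invariants
    (k : Type*) [Field k] (n : ℕ) (hn : 0 < n) (ζ : k) (hζ : IsPrimitiveRoot ζ n)
    (I : Ideal (MvPowerSeries (Fin 2) k))
    (hI : I = Ideal.span {MvPowerSeries.X 0 * MvPowerSeries.X 1})
    (g σ : (MvPowerSeries (Fin 2) k ⧸ I) ≃ₐ[k] (MvPowerSeries (Fin 2) k ⧸ I))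
    (hg : ∀ f : MvPowerSeries (Fin 2) k,
      g (Ideal.Quotient.mk I f) = Ideal.Quotient.mk I (nodeRescale k ζ f))
    (hσ : ∀ f : MvPowerSeries (Fin 2) k,
      σ (Ideal.Quotient.mk I f) = Ideal.Quotient.mk I (nodeSwap k f))
    (G : Subgroup ((MvPowerSeries (Fin 2) k ⧸ I) ≃ₐ[k] (MvPowerSeries (Fin 2) k ⧸ I)))
    (hG : G = Subgroup.closure {g, σ}) :
    ∃ Φ : PowerSeries k →ₐ[k] (MvPowerSeries (Fin 2) k ⧸ I),
      (∀ f : PowerSeries k, Φ f = Ideal.Quotient.mk I (nodePowerSumSubst k n f)) ∧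
      Function.Injective Φ ∧
      Set.range ⇑Φ =
        {a : MvPowerSeries (Fin 2) k ⧸ I | ∀ h ∈ G, h a = a} := by
  subst hG
  refine ⟨NodeAux.Phi n hn I hI, fun f => rfl, ?_, ?_⟩
  · intro f₁ f₂ hf
    apply PowerSeries.ext
    intro a
    have h := (NodeAux.mk_eq_mk_iff hI _ _).mp hf 0 (n * a)
    rw [NodeAux.coeff_subst_single, NodeAux.coeff_subst_single,
      if_pos (dvd_mul_right n a), if_pos (dvd_mul_right n a),
      Nat.mul_div_cancel_left a hn] at h
    exact h
  · ext a
    simp only [Set.mem_range, Set.mem_setOf_eq]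
    constructor
    · rintro ⟨f, rfl⟩ h hh
      refine Subgroup.closure_induction
        (p := fun x _ => x ((NodeAux.Phi n hn I hI) f) = (NodeAux.Phi n hn I hI) f)
        ?_ ?_ ?_ ?_ hh
      · rintro x hx
        rcases Set.mem_insert_iff.mp hx with rfl | hx
        · show x (Ideal.Quotient.mk I (nodePowerSumSubst k n f))
            = Ideal.Quotient.mk I (nodePowerSumSubst k n f)
          rw [hg]
          exact (NodeAux.mk_eq_mk_iff hI _ _).mpr
            fun i m => NodeAux.rescale_subst_boundary hζ f i m
        · rcases Set.mem_singleton_iff.mp hx with rfl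
          show x (Ideal.Quotient.mk I (nodePowerSumSubst k n f))
            = Ideal.Quotient.mk I (nodePowerSumSubst k n f)
          rw [hσ, NodeAux.swap_subst]
      · exact AlgEquiv.one_apply _
      · intro x y _ _ px py
        rw [AlgEquiv.mul_apply, py, px]
      · intro x _ px
        nth_rewrite 1 [← px]
        rw [← AlgEquiv.mul_apply, inv_mul_cancel, AlgEquiv.one_apply]
    · intro ha
      obtain ⟨f, rfl⟩ := Ideal.Quotient.mk_surjective a
      have hgmem : g ∈ Subgroup.closure {g, σ} :=
        Subgroup.subset_closure (Set.mem_insert _ _)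
      have hsmem : σ ∈ Subgroup.closure {g, σ} :=
        Subgroup.subset_closure (Set.mem_insert_iff.mpr (Or.inr rfl))
      have hgf := ha g hgmem
      rw [hg] at hgf
      have hsf := ha σ hsmem
      rw [hσ] at hsf
      have hre := (NodeAux.mk_eq_mk_iff hI _ _).mp hgf
      have hsw := (NodeAux.mk_eq_mk_iff hI _ _).mp hsf
      have hz : ∀ (i : Fin 2) (m : ℕ), ¬ n ∣ m →
          MvPowerSeries.coeff (Finsupp.single i m) f = 0 := by
        intro i m hm
        have h := hre i m
        rw [show MvPowerSeries.coeff (Finsupp.single i m) (nodeRescale k ζ f)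
            = ζ ^ ((Finsupp.single i m) 0) * ζ⁻¹ ^ ((Finsupp.single i m) 1) *
              MvPowerSeries.coeff (Finsupp.single i m) f from rfl] at h
        by_contra hc
        rcases NodeAux.fin2_eq i with rfl | rfl
        · rw [NodeAux.s00, NodeAux.s01, pow_zero, mul_one] at h
          have h' : ζ ^ m * MvPowerSeries.coeff (Finsupp.single 0 m) f
              = 1 * MvPowerSeries.coeff (Finsupp.single 0 m) f := by
            rw [one_mul]; exact h
          exact hm ((hζ.pow_eq_one_iff_dvd m).mp (mul_right_cancel₀ hc h'))
        · rw [NodeAux.s10, NodeAux.s11, pow_zero, one_mul] at h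
          have h' : ζ⁻¹ ^ m * MvPowerSeries.coeff (Finsupp.single 1 m) f
              = 1 * MvPowerSeries.coeff (Finsupp.single 1 m) f := by
            rw [one_mul]; exact h
          exact hm ((hζ.inv.pow_eq_one_iff_dvd m).mp (mul_right_cancel₀ hc h'))
      have hsym : ∀ m : ℕ, MvPowerSeries.coeff (Finsupp.single 1 m) f
          = MvPowerSeries.coeff (Finsupp.single 0 m) f := by
        intro m
        have h := (hsw 1 m).symm
        rw [show MvPowerSeries.coeff (Finsupp.single (1 : Fin 2) m) (nodeSwap k f)
            = MvPowerSeries.coeff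
              (Finsupp.single 0 ((Finsupp.single (1 : Fin 2) m) 1)
                + Finsupp.single 1 ((Finsupp.single (1 : Fin 2) m) 0)) f from rfl,
          NodeAux.s11, NodeAux.s10, Finsupp.single_zero, add_zero] at h
        exact h
      refine ⟨PowerSeries.mk (fun a => MvPowerSeries.coeff (Finsupp.single 0 (n * a)) f), ?_⟩
      show Ideal.Quotient.mk I (nodePowerSumSubst k n _) = Ideal.Quotient.mk I f
      refine (NodeAux.mk_eq_mk_iff hI _ _).mpr fun i m => ?_
      rw [NodeAux.coeff_subst_single]
      split_ifs with h
      · obtain ⟨a, rfl⟩ := h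
        rw [Nat.mul_div_cancel_left a hn, PowerSeries.coeff_mk]
        rcases NodeAux.fin2_eq i with rfl | rfl
        · rfl
        · exact (hsym (n * a)).symm
      · exact (hz i m h).symm
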